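/- For all closed BCCSP processes p, q: if p ⊑_CS q then the inequation p ≤ q is derivable from the axiom set A_CS consisting of B1–B4 (each used as two inequations), all instances a.p' ≤ a.(p' + q') with p', q' closed and I(p') ∩ I(q') = ∅, and all instances a.p' + a.q' ≤ a.p' with p', q' closed. -/

import Mathlib

inductive Proc (A : Type) : Type
  | nil : Proc A
  | pre : A → Proc A → Proc A
  | add : Proc A → Proc A → Proc A

inductive Step {A : Type} : Proc A → A → Proc A → Prop
  | pre (a : A) (p : Proc A) : Step (.pre a p) a p
  | addL {p : Proc A} {a : A} {p' : Proc A} (q : Proc A) :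
      Step p a p' → Step (.add p q) a p'
  | addR {q : Proc A} {a : A} {q' : Proc A} (p : Proc A) :
      Step q a q' → Step (.add p q) a q'

/-- `initials p` is the set `I(p)` of actions that `p` can immediately perform. -/
def initials {A : Type} (p : Proc A) : Set A := {a | ∃ p', Step p a p'}

/-- `{Ar, Al, Abi}` is a partition of the action set `A` (cells may be empty). -/
def IsPartition {A : Type} (Ar Al Abi : Set A) : Prop :=
  (Ar ∪ Al ∪ Abi = Set.univ) ∧ Disjoint Ar Al ∧ Disjoint Ar Abi ∧ Disjoint Al Abi

/-- Covariant-contravariant simulation w.r.t. covariant actions `Ar`,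
contravariant actions `Al` and bivariant actions `Abi`. -/
def IsCCSim {A : Type} (Ar Al Abi : Set A) (S : Proc A → Proc A → Prop) : Prop :=
  ∀ p q, S p q →
    (∀ a ∈ Ar ∪ Abi, ∀ p', Step p a p' → ∃ q', Step q a q' ∧ S p' q') ∧
    (∀ a ∈ Al ∪ Abi, ∀ q', Step q a q' → ∃ p', Step p a p' ∧ S p' q')

/-- The covariant-contravariant simulation preorder `p ≲_CC q`. -/
def ccLe {A : Type} (Ar Al Abi : Set A) (p q : Proc A) : Prop :=
  ∃ S, IsCCSim Ar Al Abi S ∧ S p q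

/-- Covariant-contravariant simulation equivalence `p ≡_CC q`. -/
def ccEq {A : Type} (Ar Al Abi : Set A) (p q : Proc A) : Prop :=
  ccLe Ar Al Abi p q ∧ ccLe Ar Al Abi q p

/-- Conformance simulation. -/
def IsConfSim {A : Type} (R : Proc A → Proc A → Prop) : Prop :=
  ∀ p q, R p q →
    initials p ⊆ initials q ∧
    (∀ a q', Step q a q' → a ∈ initials p → ∃ p', Step p a p' ∧ R p' q')

/-- The conformance simulation preorder `p ≲_CS q`. -/
def csLe {A : Type} (p q : Proc A) : Prop := ∃ R, IsConfSim R ∧ R p q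

/-- Conformance simulation equivalence `p ≡_CS q`. -/
def csEq {A : Type} (p q : Proc A) : Prop := csLe p q ∧ csLe q p

/-- The conformance precongruence `p ⊑_CS q`. -/
def csPre {A : Type} (p q : Proc A) : Prop := csLe p q ∧ initials q ⊆ initials p

/-- Plain simulation. -/
def IsSim {A : Type} (S : Proc A → Proc A → Prop) : Prop :=
  ∀ p q, S p q → ∀ a p', Step p a p' → ∃ q', Step q a q' ∧ S p' q'

/-- The plain simulation preorder `p ≲_S q`. -/
def simLe {A : Type} (p q : Proc A) : Prop := ∃ S, IsSim S ∧ S p q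

/-- Ready simulation. -/
def IsRSim {A : Type} (S : Proc A → Proc A → Prop) : Prop :=
  ∀ p q, S p q → initials p = initials q ∧
    (∀ a p', Step p a p' → ∃ q', Step q a q' ∧ S p' q')

/-- The ready simulation preorder `p ≲_RS q`. -/
def rsLe {A : Type} (p q : Proc A) : Prop := ∃ S, IsRSim S ∧ S p q

/-- Ready conformance simulation: a conformance simulation that additionally
guarantees `I(q) ⊆ I(p)` for all related pairs. -/
def IsRCSim {A : Type} (R : Proc A → Proc A → Prop) : Prop :=
  IsConfSim R ∧ ∀ p q, R p q → initials q ⊆ initials p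

/-- The ready conformance simulation preorder `p ≲_RCS q`. -/
def rcsLe {A : Type} (p q : Proc A) : Prop := ∃ R, IsRCSim R ∧ R p q

/-- Open BCCSP terms (with variables indexed by `ℕ`). -/
inductive Term (A : Type) : Type
  | var : ℕ → Term A
  | nil : Term A
  | pre : A → Term A → Term A
  | add : Term A → Term A → Term A

/-- Closed substitution applied to an open term. -/
def Term.subst {A : Type} (σ : ℕ → Proc A) : Term A → Proc A
  | .var n => σ n
  | .nil => .nil
  | .pre a t => .pre a (t.subst σ)
  | .add s t => .add (s.subst σ) (t.subst σ)

/-- View a closed process as an (open) term. -/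
def Proc.toTerm {A : Type} : Proc A → Term A
  | .nil => .nil
  | .pre a p => .pre a p.toTerm
  | .add p q => .add p.toTerm q.toTerm

/-- Inequational derivability (between closed processes) from a set `E` of
inequations between open terms: the least relation containing all substitution
instances of `E` and closed under reflexivity, transitivity and the congruence
rules for prefixing and `+`. -/
inductive DerivLe {A : Type} (E : Set (Term A × Term A)) : Proc A → Proc A → Prop
  | ax (l r : Term A) (σ : ℕ → Proc A) : (l, r) ∈ E → DerivLe E (l.subst σ) (r.subst σ)
  | refl (p : Proc A) : DerivLe E p p
  | trans {p q r : Proc A} : DerivLe E p q → DerivLe E q r → DerivLe E p r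
  | pre (a : A) {p q : Proc A} : DerivLe E p q → DerivLe E (.pre a p) (.pre a q)
  | add {p q r s : Proc A} : DerivLe E p q → DerivLe E r s → DerivLe E (.add p r) (.add q s)

/-- Equational derivability (between closed processes) from a set `E` of
equations between open terms. -/
inductive DerivEq {A : Type} (E : Set (Term A × Term A)) : Proc A → Proc A → Prop
  | ax (l r : Term A) (σ : ℕ → Proc A) : (l, r) ∈ E → DerivEq E (l.subst σ) (r.subst σ)
  | refl (p : Proc A) : DerivEq E p p
  | symm {p q : Proc A} : DerivEq E p q → DerivEq E q p
  | trans {p q r : Proc A} : DerivEq E p q → DerivEq E q r → DerivEq E p r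
  | pre (a : A) {p q : Proc A} : DerivEq E p q → DerivEq E (.pre a p) (.pre a q)
  | add {p q r s : Proc A} : DerivEq E p q → DerivEq E r s → DerivEq E (.add p r) (.add q s)

/-- Substitution of (possibly open) terms for variables. -/
def Term.substT {A : Type} (σ : ℕ → Term A) : Term A → Term A
  | .var n => σ n
  | .nil => .nil
  | .pre a t => .pre a (t.substT σ)
  | .add s t => .add (s.substT σ) (t.substT σ)

/-- Equational derivability between open terms from a set `E` of equations. -/
inductive TDerivEq {A : Type} (E : Set (Term A × Term A)) : Term A → Term A → Prop
  | ax (l r : Term A) (σ : ℕ → Term A) : (l, r) ∈ E → TDerivEq E (l.substT σ) (r.substT σ)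
  | refl (t : Term A) : TDerivEq E t t
  | symm {s t : Term A} : TDerivEq E s t → TDerivEq E t s
  | trans {s t u : Term A} : TDerivEq E s t → TDerivEq E t u → TDerivEq E s u
  | pre (a : A) {s t : Term A} : TDerivEq E s t → TDerivEq E (.pre a s) (.pre a t)
  | add {s t u v : Term A} : TDerivEq E s t → TDerivEq E u v → TDerivEq E (.add s u) (.add t v)

/-- The bisimulation axioms B1–B4, as equations. -/
def BEqns (A : Type) : Set (Term A × Term A) :=
  { (.add (.var 0) (.var 1), .add (.var 1) (.var 0)),
    (.add (.add (.var 0) (.var 1)) (.var 2), .add (.var 0) (.add (.var 1) (.var 2))),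
    (.add (.var 0) (.var 0), .var 0),
    (.add (.var 0) .nil, .var 0) }

/-- The bisimulation axioms B1–B4, each used as two inequations. -/
def BIneqs (A : Type) : Set (Term A × Term A) := BEqns A ∪ Prod.swap '' BEqns A

/-- The axiom set `A_CS`: B1–B4 as inequations, all closed instances
`a.p ≤ a.(p + q)` with `I(p) ∩ I(q) = ∅`, and all closed instances
`a.p + a.q ≤ a.p`. -/
def ACSIneqs (A : Type) : Set (Term A × Term A) :=
  BIneqs A ∪
  { e | ∃ (a : A) (p q : Proc A), initials p ∩ initials q = ∅ ∧
        e = ((Proc.pre a p).toTerm, (Proc.pre a (.add p q)).toTerm) } ∪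
  { e | ∃ (a : A) (p q : Proc A),
        e = ((Proc.add (.pre a p) (.pre a q)).toTerm, (Proc.pre a p).toTerm) }

/-!
Fix a conformance simulation `R` with `p R q` and argue by induction on `q`. Split `q` into
`q_in + q_out`, the summands whose actions `p` can and cannot perform (`Proc.restrict`). Each
summand `b.q'` of `q_in` is matched by a step `p -b-> p'` with `p' R q'`, and by induction
`b.p' ≤ b.q'`; let `m` be the sum of these `b.p'`. Then `p ≤ m`: the axioms B1–B4 give
`p ≤ p + m` because every summand of `m` is one of `p`, and since `I(p) ⊆ I(q)` every summand
`b.r` of `p` is absorbed into a summand `b.r'` of `m` by `b.r' + b.r ≤ b.r'`. Hence `p ≤ q_in`,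
and `a.p ≤ a.(p + q_out) ≤ a.q` by the axiom for disjoint initials. If moreover
`I(q) ⊆ I(p)`, then `q_in` is `q` itself.
-/

namespace Proc

variable {A : Type}

theorem step_nil {a : A} {r : Proc A} : ¬ Step .nil a r := nofun

theorem step_pre_iff {a b : A} {p r : Proc A} : Step (.pre b p) a r ↔ a = b ∧ r = p := by
  constructor
  · rintro ⟨⟩
    exact ⟨rfl, rfl⟩
  · rintro ⟨rfl, rfl⟩
    exact .pre _ _

theorem step_add_iff {a : A} {p q r : Proc A} :
    Step (.add p q) a r ↔ Step p a r ∨ Step q a r := by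
  constructor
  · rintro (_ | ⟨_, h⟩ | ⟨_, h⟩)
    exacts [.inl h, .inr h]
  · rintro (h | h)
    exacts [.addL q h, .addR p h]

@[simp] theorem initials_nil : initials (.nil : Proc A) = ∅ := by
  simp [initials, step_nil]

@[simp] theorem initials_pre (a : A) (p : Proc A) : initials (.pre a p) = {a} := by
  ext b
  simp [initials, step_pre_iff]

@[simp] theorem initials_add (p q : Proc A) :
    initials (.add p q) = initials p ∪ initials q := by
  ext b
  simp [initials, step_add_iff, exists_or]

theorem sizeOf_lt_of_step {p r : Proc A} {a : A} (h : Step p a r) : sizeOf r < sizeOf p := by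
  induction h <;> simp <;> omega

@[simp] theorem toTerm_subst (σ : ℕ → Proc A) (p : Proc A) : p.toTerm.subst σ = p := by
  induction p <;> simp_all [toTerm, Term.subst]

open Classical in
noncomputable def restrict (S : Set A) : Proc A → Proc A
  | .nil => .nil
  | .pre b p => if b ∈ S then .pre b p else .nil
  | .add p q => .add (p.restrict S) (q.restrict S)

theorem step_restrict_iff {S : Set A} {q r : Proc A} {a : A} :
    Step (q.restrict S) a r ↔ Step q a r ∧ a ∈ S := by
  induction q with
  | nil => simp [restrict, step_nil]
  | pre b p =>
    by_cases hb : b ∈ S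
    · simp only [restrict, hb, if_true, step_pre_iff]
      constructor
      · rintro ⟨rfl, rfl⟩
        exact ⟨⟨rfl, rfl⟩, hb⟩
      · exact And.left
    · simp only [restrict, hb, if_false, step_nil, false_iff, step_pre_iff]
      rintro ⟨⟨rfl, rfl⟩, ha⟩
      exact hb ha
  | add p q ihp ihq => simp only [restrict, step_add_iff, ihp, ihq, or_and_right]

theorem initials_restrict (S : Set A) (q : Proc A) :
    initials (q.restrict S) = initials q ∩ S := by
  ext a
  simp [initials, step_restrict_iff]

theorem restrict_eq_self {S : Set A} {q : Proc A} (h : initials q ⊆ S) : q.restrict S = q := by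
  induction q with
  | nil => rfl
  | pre b p => simp_all [restrict]
  | add p q ihp ihq =>
    simp only [initials_add, Set.union_subset_iff] at h
    rw [restrict, ihp h.1, ihq h.2]

end Proc

namespace DerivLe

open Proc

variable {A : Type} {E : Set (Term A × Term A)}

theorem of_mem_bEqns (hE : BIneqs A ⊆ E) {l r : Term A} (h : (l, r) ∈ BEqns A)
    (σ : ℕ → Proc A) : DerivLe E (l.subst σ) (r.subst σ) ∧ DerivLe E (r.subst σ) (l.subst σ) :=
  ⟨.ax _ _ σ (hE (.inl h)), .ax _ _ σ (hE (.inr ⟨_, h, rfl⟩))⟩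

theorem add_comm (hE : BIneqs A ⊆ E) (p q : Proc A) :
    DerivLe E (.add p q) (.add q p) :=
  (of_mem_bEqns hE (l := .add (.var 0) (.var 1)) (r := .add (.var 1) (.var 0))
    (by simp [BEqns]) fun | 0 => p | _ => q).1

theorem add_assoc (hE : BIneqs A ⊆ E) (p q r : Proc A) :
    DerivLe E (.add (.add p q) r) (.add p (.add q r)) ∧
      DerivLe E (.add p (.add q r)) (.add (.add p q) r) :=
  of_mem_bEqns hE (l := .add (.add (.var 0) (.var 1)) (.var 2))
    (r := .add (.var 0) (.add (.var 1) (.var 2))) (by simp [BEqns])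
    fun | 0 => p | 1 => q | _ => r

theorem add_self (hE : BIneqs A ⊆ E) (p : Proc A) :
    DerivLe E (.add p p) p ∧ DerivLe E p (.add p p) :=
  of_mem_bEqns hE (l := .add (.var 0) (.var 0)) (r := .var 0) (by simp [BEqns]) fun _ => p

theorem add_nil (hE : BIneqs A ⊆ E) (p : Proc A) :
    DerivLe E (.add p .nil) p ∧ DerivLe E p (.add p .nil) :=
  of_mem_bEqns hE (l := .add (.var 0) .nil) (r := .var 0) (by simp [BEqns]) fun _ => p

theorem add_add_add_comm (hE : BIneqs A ⊆ E) (p q r s : Proc A) :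
    DerivLe E (.add (.add p q) (.add r s)) (.add (.add p r) (.add q s)) :=
  (add_assoc hE _ _ _).1.trans <|
    (DerivLe.add (.refl p) <| (add_assoc hE _ _ _).2.trans <|
      (DerivLe.add (add_comm hE q r) (.refl s)).trans (add_assoc hE _ _ _).1).trans
    (add_assoc hE _ _ _).2

theorem le_add_pre_of_step (hE : BIneqs A ⊆ E) {p r : Proc A} {a : A} (h : Step p a r) :
    DerivLe E p (.add p (.pre a r)) := by
  induction h with
  | pre a p => exact (add_self hE _).2
  | addL q _ ih =>
    exact (DerivLe.add ih (.refl q)).trans <| (add_assoc hE _ _ _).1.trans <|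
      (DerivLe.add (.refl _) (add_comm hE _ _)).trans (add_assoc hE _ _ _).2
  | addR p _ ih => exact (DerivLe.add (.refl p) ih).trans (add_assoc hE _ _ _).2

theorem le_add_of_steps_subset (hE : BIneqs A ⊆ E) {p m : Proc A}
    (h : ∀ a r, Step m a r → Step p a r) : DerivLe E p (.add p m) := by
  induction m with
  | nil => exact (add_nil hE p).2
  | pre b r => exact le_add_pre_of_step hE (h b r (.pre b r))
  | add m₁ m₂ ih₁ ih₂ =>
    have h₁ := ih₁ fun a r hr => h a r (.addL m₂ hr)
    have h₂ := ih₂ fun a r hr => h a r (.addR m₁ hr)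
    exact h₁.trans <| (DerivLe.add h₂ (.refl m₁)).trans <| (add_assoc hE _ _ _).1.trans
      (DerivLe.add (.refl p) (add_comm hE _ _))

theorem restrict_add_restrict_compl_le (hE : BIneqs A ⊆ E) (S : Set A) (q : Proc A) :
    DerivLe E (.add (q.restrict S) (q.restrict Sᶜ)) q := by
  induction q with
  | nil => exact (add_nil hE _).1
  | pre b p =>
    by_cases hb : b ∈ S
    · simpa [restrict, hb] using (add_nil hE (.pre b p)).1
    · simpa [restrict, hb] using (add_comm hE _ _).trans (add_nil hE (.pre b p)).1
  | add p q ihp ihq => exact (add_add_add_comm hE _ _ _ _).trans (DerivLe.add ihp ihq)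

theorem exists_le_of_forall_step {p s : Proc A}
    (h : ∀ a s', Step s a s' → ∃ p', Step p a p' ∧ DerivLe E (.pre a p') (.pre a s')) :
    ∃ m, (∀ a r, Step m a r → Step p a r) ∧ initials s ⊆ initials m ∧ DerivLe E m s := by
  induction s with
  | nil => exact ⟨.nil, fun _ _ h => absurd h step_nil, by simp, .refl _⟩
  | pre b s' =>
    obtain ⟨p', hp', hle⟩ := h b s' (.pre b s')
    refine ⟨.pre b p', fun a r hr => ?_, by simp, hle⟩
    obtain ⟨rfl, rfl⟩ := step_pre_iff.1 hr
    exact hp'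
  | add s₁ s₂ ih₁ ih₂ =>
    obtain ⟨m₁, hm₁, hI₁, hle₁⟩ := ih₁ fun a s' hs => h a s' (.addL s₂ hs)
    obtain ⟨m₂, hm₂, hI₂, hle₂⟩ := ih₂ fun a s' hs => h a s' (.addR s₁ hs)
    refine ⟨.add m₁ m₂, fun a r hr => ?_, ?_, DerivLe.add hle₁ hle₂⟩
    · exact (step_add_iff.1 hr).elim (hm₁ a r) (hm₂ a r)
    · simpa using Set.union_subset_union hI₁ hI₂

end DerivLe

namespace ACS

open Proc

variable {A : Type}

theorem bIneqs_subset : BIneqs A ⊆ ACSIneqs A :=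
  Set.subset_union_left.trans Set.subset_union_left

theorem pre_le_pre_add_of_disjoint (a : A) {p q : Proc A} (h : initials p ∩ initials q = ∅) :
    DerivLe (ACSIneqs A) (.pre a p) (.pre a (.add p q)) := by
  simpa using DerivLe.ax (E := ACSIneqs A) _ _ (fun _ => .nil) (Or.inl (Or.inr ⟨a, p, q, h, rfl⟩))

theorem pre_add_pre_le (a : A) (p q : Proc A) :
    DerivLe (ACSIneqs A) (.add (.pre a p) (.pre a q)) (.pre a p) := by
  simpa using DerivLe.ax (E := ACSIneqs A) _ _ (fun _ => .nil) (Or.inr ⟨a, p, q, rfl⟩)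

theorem pre_add_le_of_mem_initials {b : A} {m : Proc A} (hb : b ∈ initials m) (r : Proc A) :
    DerivLe (ACSIneqs A) (.add (.pre b r) m) m := by
  obtain ⟨m', hm'⟩ := hb
  induction hm' with
  | pre b m' => exact (DerivLe.add_comm bIneqs_subset _ _).trans (pre_add_pre_le b m' r)
  | addL q _ ih =>
    exact (DerivLe.add_assoc bIneqs_subset _ _ _).2.trans (DerivLe.add ih (.refl q))
  | addR p _ ih =>
    exact (DerivLe.add_assoc bIneqs_subset _ _ _).2.trans <|
      (DerivLe.add (DerivLe.add_comm bIneqs_subset _ _) (.refl _)).trans <|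
      (DerivLe.add_assoc bIneqs_subset _ _ _).1.trans (DerivLe.add (.refl p) ih)

theorem add_le_of_initials_subset {p m : Proc A} (h : initials p ⊆ initials m) :
    DerivLe (ACSIneqs A) (.add p m) m := by
  induction p with
  | nil => exact (DerivLe.add_comm bIneqs_subset _ _).trans (DerivLe.add_nil bIneqs_subset m).1
  | pre b r => exact pre_add_le_of_mem_initials (h (by simp)) r
  | add p₁ p₂ ih₁ ih₂ =>
    simp only [initials_add, Set.union_subset_iff] at h
    exact (DerivLe.add_assoc bIneqs_subset _ _ _).1.trans <|
      (DerivLe.add (.refl p₁) (ih₂ h.2)).trans (ih₁ h.1)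

theorem le_of_steps_subset {p m : Proc A} (hm : ∀ a r, Step m a r → Step p a r)
    (hI : initials p ⊆ initials m) : DerivLe (ACSIneqs A) p m :=
  (DerivLe.le_add_of_steps_subset bIneqs_subset hm).trans (add_le_of_initials_subset hI)

theorem pre_le_pre_of_le_restrict {p q : Proc A}
    (h : DerivLe (ACSIneqs A) p (q.restrict (initials p))) (a : A) :
    DerivLe (ACSIneqs A) (.pre a p) (.pre a q) := by
  have hdisj : initials p ∩ initials (q.restrict (initials p)ᶜ) = ∅ := by
    ext
    simp +contextual [initials_restrict]
  exact (pre_le_pre_add_of_disjoint a hdisj).trans <| DerivLe.pre a <|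
    (DerivLe.add h (.refl _)).trans (DerivLe.restrict_add_restrict_compl_le bIneqs_subset _ q)

theorem le_restrict_initials_of_csLe {p q : Proc A} (hpq : csLe p q) :
    DerivLe (ACSIneqs A) p (q.restrict (initials p)) := by
  obtain ⟨R, hR, hpq⟩ := hpq
  obtain ⟨hI, hsim⟩ := hR p q hpq
  obtain ⟨m, hm, hIm, hle⟩ := DerivLe.exists_le_of_forall_step (p := p)
    (s := q.restrict (initials p)) fun a q' hq' => by
      obtain ⟨hq, ha⟩ := step_restrict_iff.1 hq'
      obtain ⟨p', hp', hr⟩ := hsim a q' hq ha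
      exact ⟨p', hp', pre_le_pre_of_le_restrict (le_restrict_initials_of_csLe ⟨R, hR, hr⟩) a⟩
  refine (le_of_steps_subset hm (fun a ha => hIm ?_)).trans hle
  rw [initials_restrict]
  exact ⟨hI ha, ha⟩
termination_by sizeOf q
decreasing_by exact sizeOf_lt_of_step hq

end ACS

/-- Completeness of `A_CS` for the conformance precongruence. -/
theorem ACS_complete {A : Type} (p q : Proc A) (h : csPre p q) :
    DerivLe (ACSIneqs A) p q := by
  obtain ⟨hle, hqp⟩ := h
  simpa only [Proc.restrict_eq_self hqp] using ACS.le_restrict_initials_of_csLe hle
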